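/- arXiv:1909.00238 — 9 statements merged into one kernel-verified Lean document; each statement's English description precedes it below -/
import Mathlib

section
/- Let H be a k-uniform hypergraph with principal eigenpair (ρ, x), maximum degree Δ and minimum degree δ > 0. Then the ratio γ = x_max / x_min satisfies γ ≥ (Δ/δ)^{1/(2(k-1))}. -/
/-! Evaluating the eigenequation at a vertex `v` of degree `d v` and bounding every entry of `x`
between `x_min` and `x_max` gives `d v * x_min^(k-1) ≤ ρ * x_v^(k-1) ≤ d v * x_max^(k-1)`.
At a vertex of maximum degree this yields `γ^(k-1) ≥ Δ/ρ`, at one of minimum degree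
`γ^(k-1) ≥ ρ/δ`; multiplying the two eliminates `ρ` and gives `γ^(2(k-1)) ≥ Δ/δ`. -/

open Finset

section EigenBounds

variable {V : Type*} [DecidableEq V] {E : Finset (Finset V)} {k : ℕ} {x : V → ℝ} {a b : ℝ}

theorem card_erase_of_mem_filter (hunif : ∀ e ∈ E, e.card = k) {v : V} {e : Finset V}
    (he : e ∈ E.filter (v ∈ ·)) : (e.erase v).card = k - 1 := by
  rw [mem_filter] at he
  rw [card_erase_of_mem he.2, hunif e he.1]

theorem card_filter_mem_mul_pow_le_sum_prod_erase (hunif : ∀ e ∈ E, e.card = k) (v : V)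
    (ha : 0 ≤ a) (hax : ∀ u, a ≤ x u) :
    ((E.filter (v ∈ ·)).card : ℝ) * a ^ (k - 1)
      ≤ ∑ e ∈ E.filter (v ∈ ·), ∏ u ∈ e.erase v, x u := by
  rw [← nsmul_eq_mul]
  refine card_nsmul_le_sum _ _ _ fun e he => ?_
  calc a ^ (k - 1) = ∏ _u ∈ e.erase v, a := by rw [prod_const, card_erase_of_mem_filter hunif he]
    _ ≤ ∏ u ∈ e.erase v, x u := prod_le_prod (fun _ _ => ha) fun u _ => hax u

theorem sum_prod_erase_le_card_filter_mem_mul_pow (hunif : ∀ e ∈ E, e.card = k) (v : V)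
    (hx : ∀ u, 0 ≤ x u) (hxb : ∀ u, x u ≤ b) :
    ∑ e ∈ E.filter (v ∈ ·), ∏ u ∈ e.erase v, x u
      ≤ ((E.filter (v ∈ ·)).card : ℝ) * b ^ (k - 1) := by
  rw [← nsmul_eq_mul]
  refine sum_le_card_nsmul _ _ _ fun e he => ?_
  calc ∏ u ∈ e.erase v, x u ≤ ∏ _u ∈ e.erase v, b := prod_le_prod (fun u _ => hx u) fun u _ => hxb u
    _ = b ^ (k - 1) := by rw [prod_const, card_erase_of_mem_filter hunif he]

end EigenBounds

theorem mul_pow_two_mul_le_of_pow_sandwich {V : Type*} {d x : V → ℝ} {ρ a b : ℝ} {n : ℕ}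
    (hρ : 0 < ρ) (ha : 0 ≤ a) (hax : ∀ u, a ≤ x u) (hxb : ∀ u, x u ≤ b)
    (hlow : ∀ u, d u * a ^ n ≤ ρ * x u ^ n) (hup : ∀ u, ρ * x u ^ n ≤ d u * b ^ n)
    (v w : V) :
    d v * a ^ (2 * n) ≤ d w * b ^ (2 * n) := by
  have hv : d v * a ^ n ≤ ρ * b ^ n :=
    (hlow v).trans (mul_le_mul_of_nonneg_left (pow_le_pow_left₀ (ha.trans (hax v)) (hxb v) n) hρ.le)
  have hw : ρ * a ^ n ≤ d w * b ^ n :=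
    (mul_le_mul_of_nonneg_left (pow_le_pow_left₀ ha (hax w) n) hρ.le).trans (hup w)
  have hb : 0 ≤ b := (ha.trans (hax v)).trans (hxb v)
  have hprod := mul_le_mul hv hw (by positivity) (by positivity)
  refine le_of_mul_le_mul_left ?_ hρ
  calc ρ * (d v * a ^ (2 * n)) = d v * a ^ n * (ρ * a ^ n) := by ring
    _ ≤ ρ * b ^ n * (d w * b ^ n) := hprod
    _ = ρ * (d w * b ^ (2 * n)) := by ring

theorem div_le_div_pow_of_mul_pow_le {Δ δ m M : ℝ} {n : ℕ} (hδ : 0 ≤ δ) (hm : 0 < m) (hM : 0 ≤ M)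
    (h : Δ * m ^ n ≤ δ * M ^ n) : Δ / δ ≤ (M / m) ^ n := by
  refine div_le_of_le_mul₀ hδ (by positivity) ?_
  rw [div_pow, div_mul_eq_mul_div, le_div_iff₀ (by positivity)]
  linarith

theorem rpow_one_div_le_of_le_pow {t s : ℝ} {n : ℕ} (ht : 0 ≤ t) (hs : 0 ≤ s) (hn : 0 < n)
    (h : t ≤ s ^ n) : t ^ (1 / (n : ℝ)) ≤ s := by
  rwa [one_div, Real.rpow_inv_le_iff_of_pos ht hs (by exact_mod_cast hn), Real.rpow_natCast]

theorem stmt4_general (V : Type*) [Fintype V] [DecidableEq V] [Nonempty V]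
    (k : ℕ) (hk : 2 ≤ k)
    (E : Finset (Finset V))
    (hunif : ∀ e ∈ E, e.card = k)
    (x : V → ℝ) (hx : ∀ v, 0 < x v)
    (ρ : ℝ) (hρ : 0 < ρ)
    (heig : ∀ v : V, ∑ e ∈ E.filter (fun e => v ∈ e), ∏ u ∈ e.erase v, x u
      = ρ * x v ^ (k - 1)) :
    (Finset.univ.sup' Finset.univ_nonempty x) / (Finset.univ.inf' Finset.univ_nonempty x) ≥ ((Finset.univ.sup' Finset.univ_nonempty (fun v => ((E.filter (fun e => v ∈ e)).card : ℝ))) / (Finset.univ.inf' Finset.univ_nonempty (fun v => ((E.filter (fun e => v ∈ e)).card : ℝ)))) ^ ((1:ℝ) / (2 * ((k:ℝ) - 1))) := by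
  set deg : V → ℝ := fun v => ((E.filter (fun e => v ∈ e)).card : ℝ)
  set m := univ.inf' univ_nonempty x
  set M := univ.sup' univ_nonempty x
  set δ := univ.inf' univ_nonempty deg
  set Δ := univ.sup' univ_nonempty deg
  have hm : 0 < m := (lt_inf'_iff _).2 fun v _ => hx v
  have hmx : ∀ v, m ≤ x v := fun v => inf'_le _ (mem_univ v)
  have hxM : ∀ v, x v ≤ M := fun v => le_sup' _ (mem_univ v)
  have hM : 0 < M := hm.trans_le ((hmx (Classical.arbitrary V)).trans (hxM _))
  have hδ : 0 ≤ δ := (le_inf'_iff _ _).2 fun _ _ => Nat.cast_nonneg _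
  obtain ⟨vΔ, -, hvΔ⟩ : ∃ v ∈ univ, Δ = deg v := exists_mem_eq_sup' univ_nonempty deg
  obtain ⟨vδ, -, hvδ⟩ : ∃ v ∈ univ, δ = deg v := exists_mem_eq_inf' univ_nonempty deg
  have hΔ : 0 ≤ Δ := hvΔ ▸ Nat.cast_nonneg _
  have hkey : Δ * m ^ (2 * (k - 1)) ≤ δ * M ^ (2 * (k - 1)) := by
    rw [hvΔ, hvδ]
    exact mul_pow_two_mul_le_of_pow_sandwich hρ hm.le hmx hxM
      (fun v => heig v ▸ card_filter_mem_mul_pow_le_sum_prod_erase hunif v hm.le hmx)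
      (fun v => heig v ▸ sum_prod_erase_le_card_filter_mem_mul_pow hunif v (fun u => (hx u).le) hxM)
      vΔ vδ
  have hexp : 2 * ((k : ℝ) - 1) = ((2 * (k - 1) : ℕ) : ℝ) := by
    push_cast [Nat.cast_sub (by omega : 1 ≤ k)]; ring
  rw [ge_iff_le, hexp]
  exact rpow_one_div_le_of_le_pow (div_nonneg hΔ hδ) (div_nonneg hM.le hm.le) (by omega)
    (div_le_div_pow_of_mul_pow_le hδ hm hM.le hkey)

theorem stmt4 (V : Type*) [Fintype V] [DecidableEq V] [Nonempty V]
    (k : ℕ) (hk : 2 ≤ k)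
    (E : Finset (Finset V))
    (hunif : ∀ e ∈ E, e.card = k)
    (x : V → ℝ) (hx : ∀ v, 0 < x v)
    (ρ : ℝ) (hρ : 0 < ρ)
    (heig : ∀ v : V, ∑ e ∈ E.filter (fun e => v ∈ e), ∏ u ∈ e.erase v, x u
      = ρ * x v ^ (k - 1))
    (hδ : 0 < (Finset.univ.inf' Finset.univ_nonempty (fun v => ((E.filter (fun e => v ∈ e)).card : ℝ)))) :
    (Finset.univ.sup' Finset.univ_nonempty x) / (Finset.univ.inf' Finset.univ_nonempty x) ≥ ((Finset.univ.sup' Finset.univ_nonempty (fun v => ((E.filter (fun e => v ∈ e)).card : ℝ))) / (Finset.univ.inf' Finset.univ_nonempty (fun v => ((E.filter (fun e => v ∈ e)).card : ℝ)))) ^ ((1:ℝ) / (2 * ((k:ℝ) - 1))) :=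
  stmt4_general V k hk E hunif x hx ρ hρ heig
end

section
/- Let H be a k-uniform hypergraph on n vertices with principal eigenpair (ρ, x) normalized so that ∑_v x_v^k = 1, maximum degree Δ and minimum degree δ > 0. Then x_max - x_min ≥ (Δ^{1/(2(k-1))} − δ^{1/(2(k-1))}) / (Δ^{1/(2(k-1))} · n^{1/k}). -/
/-!
At a vertex of maximum degree the eigenequation gives `Δ · x_min^(k-1) ≤ ρ · x_max^(k-1)`, and at a
vertex of minimum degree `ρ · x_min^(k-1) ≤ δ · x_max^(k-1)`. Eliminating `ρ` yields
`Δ^(1/(2(k-1))) · x_min ≤ δ^(1/(2(k-1))) · x_max`, so `x_max - x_min` is at least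
`x_max · (1 - (δ/Δ)^(1/(2(k-1))))`, and the normalization `∑ x_v^k = 1` forces `x_max ≥ n^(-1/k)`.
-/

open Finset

lemma mul_pow_two_mul_le_of_le_of_le {A B ρ m M : ℝ} {N : ℕ} (hρ : 0 < ρ) (hm : 0 ≤ m)
    (hM : 0 ≤ M) (h₁ : A * m ^ N ≤ ρ * M ^ N) (h₂ : ρ * m ^ N ≤ B * M ^ N) :
    A * m ^ (2 * N) ≤ B * M ^ (2 * N) := by
  have hρm : 0 ≤ ρ * m ^ N := mul_nonneg hρ.le (pow_nonneg hm N)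
  have hρM : 0 ≤ ρ * M ^ N := mul_nonneg hρ.le (pow_nonneg hM N)
  refine le_of_mul_le_mul_left ?_ hρ
  calc ρ * (A * m ^ (2 * N)) = A * m ^ N * (ρ * m ^ N) := by ring
    _ ≤ ρ * M ^ N * (ρ * m ^ N) := mul_le_mul_of_nonneg_right h₁ hρm
    _ ≤ ρ * M ^ N * (B * M ^ N) := mul_le_mul_of_nonneg_left h₂ hρM
    _ = ρ * (B * M ^ (2 * N)) := by ring

lemma rpow_inv_natCast_mul_le_of_mul_pow_le {A B m M : ℝ} {N : ℕ} (hA : 0 ≤ A) (hB : 0 ≤ B)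
    (hm : 0 ≤ m) (hM : 0 ≤ M) (hN : N ≠ 0) (h : A * m ^ N ≤ B * M ^ N) :
    A ^ (N⁻¹ : ℝ) * m ≤ B ^ (N⁻¹ : ℝ) * M := by
  have := Real.rpow_le_rpow (by positivity) h (inv_nonneg.2 (Nat.cast_nonneg N))
  rwa [Real.mul_rpow hA (by positivity), Real.mul_rpow hB (by positivity),
    Real.pow_rpow_inv_natCast hm hN, Real.pow_rpow_inv_natCast hM hN] at this

lemma sub_div_mul_le_sub_of_mul_le_mul {a b c m M : ℝ} (ha : 0 < a) (hba : b ≤ a) (hc : 0 < c)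
    (h : a * m ≤ b * M) (hcM : 1 ≤ c * M) : (a - b) / (a * c) ≤ M - m := by
  rw [div_le_iff₀ (mul_pos ha hc)]
  nlinarith [mul_le_mul_of_nonneg_right h hc.le, mul_le_mul_of_nonneg_left hcM (sub_nonneg.2 hba)]

lemma one_le_card_rpow_mul_sup' {V : Type*} [Fintype V] [Nonempty V] {k : ℕ} (hk : k ≠ 0)
    {x : V → ℝ} (hx : ∀ v, 0 ≤ x v) (hnorm : ∑ v, x v ^ k = 1) :
    1 ≤ (Fintype.card V : ℝ) ^ ((1 : ℝ) / k) * univ.sup' univ_nonempty x := by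
  set M := univ.sup' univ_nonempty x
  have hM : 0 ≤ M := (hx (Classical.arbitrary V)).trans (le_sup' x (mem_univ _))
  have hsum : 1 ≤ (Fintype.card V : ℝ) * M ^ k := by
    calc (1 : ℝ) = ∑ v, x v ^ k := hnorm.symm
      _ ≤ ∑ _v : V, M ^ k :=
          sum_le_sum fun v _ => pow_le_pow_left₀ (hx v) (le_sup' x (mem_univ v)) k
      _ = (Fintype.card V : ℝ) * M ^ k := by rw [sum_const, card_univ, nsmul_eq_mul]
  rwa [← one_le_pow_iff_of_nonneg (by positivity) hk, mul_pow, one_div,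
    Real.rpow_inv_natCast_pow (Nat.cast_nonneg _) hk]

section Hypergraph

variable {V : Type*} [DecidableEq V] {k : ℕ} {E : Finset (Finset V)} {x : V → ℝ}

lemma degree_mul_pow_le_sum_prod_erase (hunif : ∀ e ∈ E, e.card = k) {a : ℝ} (ha : 0 ≤ a)
    (hax : ∀ u, a ≤ x u) (v : V) :
    ((E.filter (v ∈ ·)).card : ℝ) * a ^ (k - 1) ≤ ∑ e ∈ E.filter (v ∈ ·), ∏ u ∈ e.erase v, x u := by
  rw [← nsmul_eq_mul]
  refine card_nsmul_le_sum _ _ _ fun e he => ?_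
  obtain ⟨heE, hve⟩ := mem_filter.1 he
  calc a ^ (k - 1) = ∏ _u ∈ e.erase v, a := by rw [prod_const, card_erase_of_mem hve, hunif e heE]
    _ ≤ ∏ u ∈ e.erase v, x u := prod_le_prod (fun _ _ => ha) fun u _ => hax u

lemma sum_prod_erase_le_degree_mul_pow (hunif : ∀ e ∈ E, e.card = k) (hx : ∀ u, 0 ≤ x u) {b : ℝ}
    (hxb : ∀ u, x u ≤ b) (v : V) :
    ∑ e ∈ E.filter (v ∈ ·), ∏ u ∈ e.erase v, x u ≤ ((E.filter (v ∈ ·)).card : ℝ) * b ^ (k - 1) := by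
  rw [← nsmul_eq_mul]
  refine sum_le_card_nsmul _ _ _ fun e he => ?_
  obtain ⟨heE, hve⟩ := mem_filter.1 he
  calc ∏ u ∈ e.erase v, x u ≤ ∏ _u ∈ e.erase v, b :=
        prod_le_prod (fun u _ => hx u) fun u _ => hxb u
    _ = b ^ (k - 1) := by rw [prod_const, card_erase_of_mem hve, hunif e heE]

variable [Fintype V] [Nonempty V] {ρ : ℝ}

lemma sup'_degree_mul_inf'_pow_le (hunif : ∀ e ∈ E, e.card = k) (hx : ∀ v, 0 < x v)
    (hρ : 0 ≤ ρ) (heig : ∀ v, ∑ e ∈ E.filter (v ∈ ·), ∏ u ∈ e.erase v, x u = ρ * x v ^ (k - 1)) :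
    univ.sup' univ_nonempty (fun v => ((E.filter (v ∈ ·)).card : ℝ))
        * univ.inf' univ_nonempty x ^ (k - 1) ≤ ρ * univ.sup' univ_nonempty x ^ (k - 1) := by
  obtain ⟨v, -, hv⟩ := exists_mem_eq_sup' univ_nonempty fun v => ((E.filter (v ∈ ·)).card : ℝ)
  have hinf : 0 ≤ univ.inf' univ_nonempty x := ((lt_inf'_iff _).2 fun v _ => hx v).le
  calc _ ≤ ρ * x v ^ (k - 1) := hv ▸
        heig v ▸ degree_mul_pow_le_sum_prod_erase hunif hinf (fun u => inf'_le x (mem_univ u)) v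
    _ ≤ _ := by gcongr; exacts [(hx v).le, le_sup' x (mem_univ v)]

lemma mul_inf'_pow_le_inf'_degree_mul (hunif : ∀ e ∈ E, e.card = k) (hx : ∀ v, 0 < x v)
    (hρ : 0 ≤ ρ) (heig : ∀ v, ∑ e ∈ E.filter (v ∈ ·), ∏ u ∈ e.erase v, x u = ρ * x v ^ (k - 1)) :
    ρ * univ.inf' univ_nonempty x ^ (k - 1) ≤ univ.inf' univ_nonempty
        (fun v => ((E.filter (v ∈ ·)).card : ℝ)) * univ.sup' univ_nonempty x ^ (k - 1) := by
  obtain ⟨v, -, hv⟩ := exists_mem_eq_inf' univ_nonempty fun v => ((E.filter (v ∈ ·)).card : ℝ)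
  have hinf : 0 ≤ univ.inf' univ_nonempty x := ((lt_inf'_iff _).2 fun v _ => hx v).le
  calc _ ≤ ρ * x v ^ (k - 1) :=
        mul_le_mul_of_nonneg_left (pow_le_pow_left₀ hinf (inf'_le x (mem_univ v)) _) hρ
    _ ≤ _ := hv ▸ heig v ▸ sum_prod_erase_le_degree_mul_pow hunif (fun u => (hx u).le)
        (fun u => le_sup' x (mem_univ u)) v

end Hypergraph

theorem stmt5 (V : Type*) [Fintype V] [DecidableEq V] [Nonempty V]
    (k : ℕ) (hk : 2 ≤ k)
    (E : Finset (Finset V))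
    (hunif : ∀ e ∈ E, e.card = k)
    (x : V → ℝ) (hx : ∀ v, 0 < x v)
    (ρ : ℝ) (hρ : 0 < ρ)
    (heig : ∀ v : V, ∑ e ∈ E.filter (fun e => v ∈ e), ∏ u ∈ e.erase v, x u
      = ρ * x v ^ (k - 1))
    (hnorm : ∑ v : V, x v ^ k = 1)
    (hδ : 0 < (Finset.univ.inf' Finset.univ_nonempty (fun v => ((E.filter (fun e => v ∈ e)).card : ℝ)))) :
    (Finset.univ.sup' Finset.univ_nonempty x) - (Finset.univ.inf' Finset.univ_nonempty x) ≥
      ((Finset.univ.sup' Finset.univ_nonempty (fun v => ((E.filter (fun e => v ∈ e)).card : ℝ))) ^ ((1:ℝ) / (2 * ((k:ℝ) - 1))) - (Finset.univ.inf' Finset.univ_nonempty (fun v => ((E.filter (fun e => v ∈ e)).card : ℝ))) ^ ((1:ℝ) / (2 * ((k:ℝ) - 1))))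
        / ((Finset.univ.sup' Finset.univ_nonempty (fun v => ((E.filter (fun e => v ∈ e)).card : ℝ))) ^ ((1:ℝ) / (2 * ((k:ℝ) - 1))) * (Fintype.card V : ℝ) ^ ((1:ℝ)/(k:ℝ))) := by
  set deg : V → ℝ := fun v => ((E.filter (fun e => v ∈ e)).card : ℝ)
  have hδΔ : univ.inf' univ_nonempty deg ≤ univ.sup' univ_nonempty deg :=
    (inf'_le deg (mem_univ _)).trans (le_sup' deg (mem_univ (Classical.arbitrary V)))
  have hm : 0 < univ.inf' univ_nonempty x := (lt_inf'_iff _).2 fun v _ => hx v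
  have hM : 0 < univ.sup' univ_nonempty x := hm.trans_le <|
    (inf'_le x (mem_univ _)).trans (le_sup' x (mem_univ (Classical.arbitrary V)))
  have hexp : (1 : ℝ) / (2 * ((k : ℝ) - 1)) = ((2 * (k - 1) : ℕ) : ℝ)⁻¹ := by
    rw [one_div, Nat.cast_mul, Nat.cast_sub (by omega)]; norm_num
  have hdegrees := mul_pow_two_mul_le_of_le_of_le hρ hm.le hM.le
    (sup'_degree_mul_inf'_pow_le hunif hx hρ.le heig)
    (mul_inf'_pow_le_inf'_degree_mul hunif hx hρ.le heig)
  have hspread := rpow_inv_natCast_mul_le_of_mul_pow_le (hδ.le.trans hδΔ) hδ.le hm.le hM.le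
    (by omega) hdegrees
  rw [← hexp] at hspread
  exact sub_div_mul_le_sub_of_mul_le_mul (Real.rpow_pos_of_pos (hδ.trans_le hδΔ) _)
    (Real.rpow_le_rpow hδ.le hδΔ (by rw [hexp]; positivity))
    (Real.rpow_pos_of_pos (Nat.cast_pos.2 Fintype.card_pos) _) hspread
    (one_le_card_rpow_mul_sup' (by omega) (fun v => (hx v).le) hnorm)
end

section
/- Let H be a k-uniform hypergraph on n vertices with principal eigenpair (ρ, x) normalized by ∑_v x_v^k = 1, with maximum degree Δ and minimum degree δ > 0. Then x_max ≥ ( (δ/Δ)^{k/(2(k-1))} + n − 1 )^{-1/k}. -/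
/-!
Evaluating the eigenequation at a vertex `v` of minimum degree and at a vertex `w` of maximum
degree gives `ρ x_min^(k-1) ≤ δ x_max^(k-1)` and `Δ x_min^(k-1) ≤ ρ x_max^(k-1)`; multiplying
eliminates `ρ`, so `(x_min / x_max)^(2(k-1)) ≤ δ / Δ`. In the normalization `1 = ∑ x_v^k`, bound
the smallest term by `(δ/Δ)^(k/(2(k-1))) x_max^k` and the other `n - 1` terms by `x_max^k`.
-/

open Finset

section Hypergraph

variable {V : Type*} [DecidableEq V] {k : ℕ} {E : Finset (Finset V)} {x : V → ℝ}

lemma sum_incident_prod_erase_le (hunif : ∀ e ∈ E, #e = k) (hx : ∀ u, 0 ≤ x u) {M : ℝ}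
    (hM : ∀ u, x u ≤ M) (v : V) :
    ∑ e ∈ E.filter (v ∈ ·), ∏ u ∈ e.erase v, x u ≤ #(E.filter (v ∈ ·)) * M ^ (k - 1) := by
  rw [← nsmul_eq_mul]
  refine sum_le_card_nsmul _ _ _ fun e he => ?_
  obtain ⟨heE, hve⟩ := mem_filter.1 he
  calc ∏ u ∈ e.erase v, x u ≤ ∏ _u ∈ e.erase v, M :=
        prod_le_prod (fun u _ => hx u) fun u _ => hM u
    _ = M ^ (k - 1) := by rw [prod_const, card_erase_of_mem hve, hunif e heE]

lemma mul_pow_le_sum_incident_prod_erase (hunif : ∀ e ∈ E, #e = k) {m : ℝ} (hm0 : 0 ≤ m)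
    (hm : ∀ u, m ≤ x u) (v : V) :
    #(E.filter (v ∈ ·)) * m ^ (k - 1) ≤ ∑ e ∈ E.filter (v ∈ ·), ∏ u ∈ e.erase v, x u := by
  rw [← nsmul_eq_mul]
  refine card_nsmul_le_sum _ _ _ fun e he => ?_
  obtain ⟨heE, hve⟩ := mem_filter.1 he
  calc m ^ (k - 1) = ∏ _u ∈ e.erase v, m := by
        rw [prod_const, card_erase_of_mem hve, hunif e heE]
    _ ≤ ∏ u ∈ e.erase v, x u := prod_le_prod (fun _ _ => hm0) fun u _ => hm u

lemma card_incident_mul_pow_le {ρ : ℝ} (hρ : 0 < ρ) (hunif : ∀ e ∈ E, #e = k)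
    (heig : ∀ v, ∑ e ∈ E.filter (v ∈ ·), ∏ u ∈ e.erase v, x u = ρ * x v ^ (k - 1))
    {m M : ℝ} (hm0 : 0 ≤ m) (hm : ∀ u, m ≤ x u) (hM : ∀ u, x u ≤ M) (v w : V) :
    #(E.filter (w ∈ ·)) * m ^ (2 * (k - 1)) ≤ #(E.filter (v ∈ ·)) * M ^ (2 * (k - 1)) := by
  have hx : ∀ u, 0 ≤ x u := fun u => hm0.trans (hm u)
  have hv : ρ * m ^ (k - 1) ≤ #(E.filter (v ∈ ·)) * M ^ (k - 1) := by
    calc ρ * m ^ (k - 1) ≤ ρ * x v ^ (k - 1) := by gcongr; exact hm v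
      _ = _ := (heig v).symm
      _ ≤ _ := sum_incident_prod_erase_le hunif hx hM v
  have hw : #(E.filter (w ∈ ·)) * m ^ (k - 1) ≤ ρ * M ^ (k - 1) := by
    calc _ ≤ ∑ e ∈ E.filter (w ∈ ·), ∏ u ∈ e.erase w, x u :=
          mul_pow_le_sum_incident_prod_erase hunif hm0 hm w
      _ = ρ * x w ^ (k - 1) := heig w
      _ ≤ ρ * M ^ (k - 1) := by gcongr; exacts [hx w, hM w]
  have hM0 : 0 ≤ M := hm0.trans ((hm w).trans (hM w))
  have key : ρ * (#(E.filter (w ∈ ·)) * m ^ (2 * (k - 1))) ≤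
      ρ * (#(E.filter (v ∈ ·)) * M ^ (2 * (k - 1))) := by
    rw [two_mul, pow_add, pow_add]
    linarith [mul_le_mul hw hv (by positivity) (by positivity)]
  exact le_of_mul_le_mul_left key hρ

end Hypergraph

lemma pow_le_rpow_div_mul_pow {a : ℕ} (ha : a ≠ 0) (b : ℕ) {m M δ Δ : ℝ} (hm : 0 ≤ m)
    (hM : 0 < M) (hΔ : 0 < Δ) (h : Δ * m ^ a ≤ δ * M ^ a) :
    m ^ b ≤ (δ / Δ) ^ ((b : ℝ) / a) * M ^ b := by
  have hs : (m / M) ^ a ≤ δ / Δ := by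
    rw [div_pow, div_le_div_iff₀ (by positivity) hΔ]
    linarith
  have hsb : (m / M) ^ b ≤ (δ / Δ) ^ ((b : ℝ) / a) := by
    calc (m / M) ^ b = ((m / M) ^ a) ^ ((b : ℝ) / a) := by
          rw [← Real.rpow_natCast _ a, ← Real.rpow_mul (by positivity),
            mul_div_cancel₀ _ (Nat.cast_ne_zero.2 ha), Real.rpow_natCast]
      _ ≤ _ := Real.rpow_le_rpow (by positivity) hs (by positivity)
  rwa [div_pow, div_le_iff₀ (by positivity)] at hsb

lemma sum_le_add_card_sub_one_mul {V : Type*} [Fintype V] [DecidableEq V] (f : V → ℝ) {B : ℝ}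
    (hB : ∀ v, f v ≤ B) (v₀ : V) : ∑ v, f v ≤ f v₀ + (Fintype.card V - 1) * B := by
  rw [← add_sum_erase _ _ (mem_univ v₀)]
  gcongr
  calc ∑ v ∈ univ.erase v₀, f v ≤ #(univ.erase v₀) • B := sum_le_card_nsmul _ _ _ fun v _ => hB v
    _ = (Fintype.card V - 1) * B := by
      rw [nsmul_eq_mul, card_erase_of_mem (mem_univ v₀), card_univ,
        Nat.cast_sub (Fintype.card_pos_iff.2 ⟨v₀⟩), Nat.cast_one]

lemma rpow_neg_one_div_le_of_one_le_mul_pow {k : ℕ} (hk : k ≠ 0) {C M : ℝ} (hC : 0 < C)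
    (hM : 0 ≤ M) (h : 1 ≤ C * M ^ k) : C ^ (-1 / (k : ℝ)) ≤ M := by
  have hkR : (0 : ℝ) < k := by positivity
  rw [neg_div, Real.rpow_neg hC.le, ← Real.inv_rpow hC.le, one_div,
    Real.rpow_inv_le_iff_of_pos (by positivity) hM hkR, Real.rpow_natCast]
  exact (inv_le_iff_one_le_mul₀' hC).2 h

theorem stmt6 (V : Type*) [Fintype V] [DecidableEq V] [Nonempty V]
    (k : ℕ) (hk : 2 ≤ k)
    (E : Finset (Finset V))
    (hunif : ∀ e ∈ E, e.card = k)
    (x : V → ℝ) (hx : ∀ v, 0 < x v)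
    (ρ : ℝ) (hρ : 0 < ρ)
    (heig : ∀ v : V, ∑ e ∈ E.filter (fun e => v ∈ e), ∏ u ∈ e.erase v, x u
      = ρ * x v ^ (k - 1))
    (hnorm : ∑ v : V, x v ^ k = 1)
    (hδ : 0 < (Finset.univ.inf' Finset.univ_nonempty (fun v => ((E.filter (fun e => v ∈ e)).card : ℝ)))) :
    (Finset.univ.sup' Finset.univ_nonempty x) ≥ (((Finset.univ.inf' Finset.univ_nonempty (fun v => ((E.filter (fun e => v ∈ e)).card : ℝ))) / (Finset.univ.sup' Finset.univ_nonempty (fun v => ((E.filter (fun e => v ∈ e)).card : ℝ)))) ^ ((k:ℝ) / (2 * ((k:ℝ) - 1))) + (Fintype.card V : ℝ) - 1) ^ (-(1:ℝ)/(k:ℝ)) := by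
  set d : V → ℝ := fun v => (#(E.filter (v ∈ ·)) : ℝ)
  obtain ⟨v₀, -, hv₀⟩ := exists_mem_eq_inf' univ_nonempty x
  obtain ⟨vδ, -, hvδ⟩ := exists_mem_eq_inf' univ_nonempty d
  obtain ⟨vΔ, -, hvΔ⟩ := exists_mem_eq_sup' univ_nonempty d
  set δ := univ.inf' univ_nonempty d
  set Δ := univ.sup' univ_nonempty d
  set m := univ.inf' univ_nonempty x
  set M := univ.sup' univ_nonempty x
  have hm : ∀ v, m ≤ x v := fun v => inf'_le _ (mem_univ v)
  have hM : ∀ v, x v ≤ M := fun v => le_sup' _ (mem_univ v)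
  have hm0 : 0 < m := hv₀ ▸ hx v₀
  have hM0 : 0 < M := hm0.trans_le ((hm v₀).trans (hM v₀))
  have hΔ : 0 < Δ := hδ.trans_le ((inf'_le d (mem_univ v₀)).trans (le_sup' d (mem_univ v₀)))
  have hratio : Δ * m ^ (2 * (k - 1)) ≤ δ * M ^ (2 * (k - 1)) := by
    rw [hvδ, hvΔ]
    exact card_incident_mul_pow_le hρ hunif heig hm0.le hm hM vδ vΔ
  have hmin := pow_le_rpow_div_mul_pow (by omega) k hm0.le hM0 hΔ hratio
  have hexp : (k : ℝ) / ((2 * (k - 1) : ℕ) : ℝ) = k / (2 * (k - 1)) := by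
    push_cast [Nat.cast_sub (by omega : 1 ≤ k)]; rfl
  rw [hexp] at hmin
  have hsum := sum_le_add_card_sub_one_mul _ (fun v => pow_le_pow_left₀ (hx v).le (hM v) k) v₀
  rw [← hv₀] at hsum
  refine rpow_neg_one_div_le_of_one_le_mul_pow (by omega) ?_ hM0.le ?_
  · have hn : (1 : ℝ) ≤ Fintype.card V := by exact_mod_cast Fintype.card_pos
    have hr : 0 < (δ / Δ) ^ ((k : ℝ) / (2 * (k - 1))) := Real.rpow_pos_of_pos (div_pos hδ hΔ) _
    linarith
  · linarith
end

section
/- Let H be a k-uniform hypergraph on n vertices with principal eigenpair (ρ, x) normalized by ∑_v x_v^k = 1, maximum degree Δ and minimum degree δ > 0. Then x_min ≤ ( (Δ/δ)^{k/(2(k-1))} + n − 1 )^{-1/k}. -/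
/-!
Write `m` and `M` for the least and largest entry of `x`, and `d v` for the degree of `v`.
Every product in the eigenequation at `v` lies between `m ^ (k - 1)` and `M ^ (k - 1)`,
so `d v * m ^ (k - 1) ≤ ρ * x v ^ (k - 1) ≤ d v * M ^ (k - 1)`. Using the left inequality at a
vertex of maximum degree and the right one at a vertex of minimum degree, and multiplying them,
eliminates `ρ`: `Δ * m ^ (2 (k - 1)) ≤ δ * M ^ (2 (k - 1))`, that is
`(Δ / δ) ^ (k / (2 (k - 1))) ≤ (M / m) ^ k`. Hence
`1 = ∑ v, x v ^ k ≥ M ^ k + (n - 1) m ^ k ≥ ((Δ / δ) ^ (k / (2 (k - 1))) + n - 1) m ^ k`.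
-/

open Finset

section Eigenequation

variable {V : Type*} [DecidableEq V] {E : Finset (Finset V)} {k : ℕ} {x : V → ℝ} {ρ : ℝ}

lemma pow_le_prod_erase {e : Finset V} {v : V} (hv : v ∈ e) (he : e.card = k) {a : ℝ}
    (ha : 0 ≤ a) (hax : ∀ u, a ≤ x u) : a ^ (k - 1) ≤ ∏ u ∈ e.erase v, x u :=
  calc a ^ (k - 1) = ∏ _u ∈ e.erase v, a := by rw [prod_const, card_erase_of_mem hv, he]
    _ ≤ ∏ u ∈ e.erase v, x u := prod_le_prod (fun _ _ => ha) fun u _ => hax u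

lemma prod_erase_le_pow {e : Finset V} {v : V} (hv : v ∈ e) (he : e.card = k)
    (hx : ∀ u, 0 ≤ x u) {b : ℝ} (hxb : ∀ u, x u ≤ b) :
    ∏ u ∈ e.erase v, x u ≤ b ^ (k - 1) :=
  calc ∏ u ∈ e.erase v, x u ≤ ∏ _u ∈ e.erase v, b :=
      prod_le_prod (fun u _ => hx u) fun u _ => hxb u
    _ = b ^ (k - 1) := by rw [prod_const, card_erase_of_mem hv, he]

lemma card_mul_pow_le_of_eigen (hunif : ∀ e ∈ E, e.card = k) {v : V}
    (heig : ∑ e ∈ E.filter (fun e => v ∈ e), ∏ u ∈ e.erase v, x u = ρ * x v ^ (k - 1))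
    {a : ℝ} (ha : 0 ≤ a) (hax : ∀ u, a ≤ x u) :
    ((E.filter (fun e => v ∈ e)).card : ℝ) * a ^ (k - 1) ≤ ρ * x v ^ (k - 1) := by
  rw [← heig, ← nsmul_eq_mul]
  refine card_nsmul_le_sum _ _ _ fun e he => ?_
  rw [mem_filter] at he
  exact pow_le_prod_erase he.2 (hunif e he.1) ha hax

lemma eigen_le_card_mul_pow (hunif : ∀ e ∈ E, e.card = k) {v : V}
    (heig : ∑ e ∈ E.filter (fun e => v ∈ e), ∏ u ∈ e.erase v, x u = ρ * x v ^ (k - 1))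
    (hx : ∀ u, 0 ≤ x u) {b : ℝ} (hxb : ∀ u, x u ≤ b) :
    ρ * x v ^ (k - 1) ≤ ((E.filter (fun e => v ∈ e)).card : ℝ) * b ^ (k - 1) := by
  rw [← heig, ← nsmul_eq_mul]
  refine sum_le_card_nsmul _ _ _ fun e he => ?_
  rw [mem_filter] at he
  exact prod_erase_le_pow he.2 (hunif e he.1) hx hxb

lemma card_mul_pow_le_card_mul_pow (hunif : ∀ e ∈ E, e.card = k) (hx : ∀ u, 0 ≤ x u)
    (hρ : 0 ≤ ρ) (heig : ∀ v, ∑ e ∈ E.filter (fun e => v ∈ e), ∏ u ∈ e.erase v, x u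
      = ρ * x v ^ (k - 1))
    {m M : ℝ} (hm : 0 ≤ m) (hmx : ∀ u, m ≤ x u) (hxM : ∀ u, x u ≤ M) (v w : V) :
    ((E.filter (fun e => v ∈ e)).card : ℝ) * m ^ (2 * (k - 1))
      ≤ ((E.filter (fun e => w ∈ e)).card : ℝ) * M ^ (2 * (k - 1)) := by
  have hM : 0 ≤ M := hm.trans ((hmx v).trans (hxM v))
  have hv : ((E.filter (fun e => v ∈ e)).card : ℝ) * m ^ (k - 1) ≤ ρ * M ^ (k - 1) :=
    (card_mul_pow_le_of_eigen hunif (heig v) hm hmx).trans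
      (by gcongr; exacts [hx v, hxM v])
  have hw : ρ * m ^ (k - 1) ≤ ((E.filter (fun e => w ∈ e)).card : ℝ) * M ^ (k - 1) :=
    (by gcongr; exact hmx w : ρ * m ^ (k - 1) ≤ ρ * x w ^ (k - 1)).trans
      (eigen_le_card_mul_pow hunif (heig w) hx hxM)
  rw [two_mul, pow_add, pow_add]
  calc ((E.filter (fun e => v ∈ e)).card : ℝ) * (m ^ (k - 1) * m ^ (k - 1))
      ≤ ρ * M ^ (k - 1) * m ^ (k - 1) := by rw [← mul_assoc]; gcongr
    _ = ρ * m ^ (k - 1) * M ^ (k - 1) := by ring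
    _ ≤ ((E.filter (fun e => w ∈ e)).card : ℝ) * (M ^ (k - 1) * M ^ (k - 1)) := by
      rw [← mul_assoc]; gcongr

end Eigenequation

lemma rpow_div_le_pow_of_le_pow {t y : ℝ} {j : ℕ} (ht : 0 ≤ t) (hy : 0 ≤ y) (hj : j ≠ 0)
    (h : t ≤ y ^ j) (n : ℕ) : t ^ ((n : ℝ) / j) ≤ y ^ n :=
  calc t ^ ((n : ℝ) / j) ≤ (y ^ j) ^ ((n : ℝ) / j) := by gcongr
    _ = y ^ n := by
      rw [← Real.rpow_natCast_mul hy, mul_div_cancel₀ _ (Nat.cast_ne_zero.2 hj),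
        Real.rpow_natCast]

lemma add_card_sub_one_mul_le_sum {V : Type*} [Fintype V] {f : V → ℝ} {b : ℝ}
    (hb : ∀ v, b ≤ f v) (a : V) : f a + (Fintype.card V - 1 : ℝ) * b ≤ ∑ v, f v := by
  classical
  rw [← add_sum_erase univ f (mem_univ a)]
  gcongr
  have hcard : ((univ.erase a).card : ℝ) = Fintype.card V - 1 := by
    rw [card_erase_of_mem (mem_univ a), card_univ, Nat.cast_pred (Fintype.card_pos_iff.2 ⟨a⟩)]
  rw [← hcard, ← nsmul_eq_mul]
  exact card_nsmul_le_sum _ _ _ fun v _ => hb v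

lemma le_rpow_neg_one_div_of_mul_pow_le_one {m C : ℝ} {k : ℕ} (hm : 0 ≤ m) (hC : 0 < C)
    (hk : k ≠ 0) (h : C * m ^ k ≤ 1) : m ≤ C ^ (-(1 : ℝ) / k) := by
  have hmk : m ^ k ≤ C⁻¹ := one_div C ▸ (le_div_iff₀' hC).2 h
  rw [neg_div, Real.rpow_neg hC.le, ← Real.inv_rpow hC.le, one_div]
  calc m = (m ^ k) ^ (k⁻¹ : ℝ) := (Real.pow_rpow_inv_natCast hm hk).symm
    _ ≤ C⁻¹ ^ (k⁻¹ : ℝ) := by gcongr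

theorem stmt7 (V : Type*) [Fintype V] [DecidableEq V] [Nonempty V]
    (k : ℕ) (hk : 2 ≤ k)
    (E : Finset (Finset V))
    (hunif : ∀ e ∈ E, e.card = k)
    (x : V → ℝ) (hx : ∀ v, 0 < x v)
    (ρ : ℝ) (hρ : 0 < ρ)
    (heig : ∀ v : V, ∑ e ∈ E.filter (fun e => v ∈ e), ∏ u ∈ e.erase v, x u
      = ρ * x v ^ (k - 1))
    (hnorm : ∑ v : V, x v ^ k = 1)
    (hδ : 0 < (Finset.univ.inf' Finset.univ_nonempty (fun v => ((E.filter (fun e => v ∈ e)).card : ℝ)))) :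
    (Finset.univ.inf' Finset.univ_nonempty x) ≤ (((Finset.univ.sup' Finset.univ_nonempty (fun v => ((E.filter (fun e => v ∈ e)).card : ℝ))) / (Finset.univ.inf' Finset.univ_nonempty (fun v => ((E.filter (fun e => v ∈ e)).card : ℝ)))) ^ ((k:ℝ) / (2 * ((k:ℝ) - 1))) + (Fintype.card V : ℝ) - 1) ^ (-(1:ℝ)/(k:ℝ)) := by
  set deg : V → ℝ := fun v => ((E.filter (fun e => v ∈ e)).card : ℝ)
  obtain ⟨vm, -, hvm⟩ := exists_mem_eq_inf' univ_nonempty x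
  obtain ⟨vM, -, hvM⟩ := exists_mem_eq_sup' univ_nonempty x
  obtain ⟨vδ, -, hvδ⟩ := exists_mem_eq_inf' univ_nonempty deg
  obtain ⟨vΔ, -, hvΔ⟩ := exists_mem_eq_sup' univ_nonempty deg
  set m := univ.inf' univ_nonempty x
  set M := univ.sup' univ_nonempty x
  set δ := univ.inf' univ_nonempty deg
  set Δ := univ.sup' univ_nonempty deg
  have hm : 0 < m := hvm ▸ hx vm
  have hM : 0 < M := hvM ▸ hx vM
  have hδΔ : δ ≤ Δ := (inf'_le deg (mem_univ vδ)).trans (le_sup' deg (mem_univ vδ))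
  have hΔδ : 0 < Δ / δ := div_pos (hδ.trans_le hδΔ) hδ
  have hratio : Δ / δ ≤ (M / m) ^ (2 * (k - 1)) := by
    rw [div_pow, div_le_div_iff₀ hδ (by positivity), hvΔ, hvδ, mul_comm _ (deg vδ)]
    exact card_mul_pow_le_card_mul_pow hunif (fun u => (hx u).le) hρ.le heig hm.le
      (fun u => inf'_le x (mem_univ u)) (fun u => le_sup' x (mem_univ u)) vΔ vδ
  have hexp : ((2 * (k - 1) : ℕ) : ℝ) = 2 * ((k : ℝ) - 1) := by
    push_cast [Nat.cast_sub (by omega : 1 ≤ k)]; ring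
  have hpow :=
    hexp ▸ rpow_div_le_pow_of_le_pow hΔδ.le (by positivity) (by omega) hratio k
  have hsum := hnorm ▸ hvM ▸ add_card_sub_one_mul_le_sum (fun v => pow_le_pow_left₀ hm.le
    (inf'_le x (mem_univ v)) k) vM
  have hn : (1 : ℝ) ≤ Fintype.card V := by exact_mod_cast Fintype.card_pos
  have hC := Real.rpow_pos_of_pos hΔδ ((k : ℝ) / (2 * ((k : ℝ) - 1)))
  refine le_rpow_neg_one_div_of_mul_pow_le_one hm.le (by linarith) (by omega) ?_
  calc _ = _ * m ^ k + (Fintype.card V - 1 : ℝ) * m ^ k := by ring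
    _ ≤ (M / m) ^ k * m ^ k + (Fintype.card V - 1 : ℝ) * m ^ k := by gcongr
    _ ≤ 1 := by rwa [div_pow, div_mul_cancel₀ _ (by positivity)]
end

section
/- Let H be a k-uniform hypergraph with principal eigenpair (ρ, x) normalized by ∑_v x_v^k = 1, ρ > 0. Then x_max ≥ ρ^{1/(k-1)} / ( ∑_{v∈V} d(v)^{k/(k-1)} )^{1/k}. -/
/-!
Bounding every product in the eigenequation by `x_max` gives `ρ x_v^(k-1) ≤ d(v) x_max^(k-1)`.
Raising this to the power `k/(k-1)` and summing over `v` against `∑ x_v^k = 1` yields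
`ρ^(k/(k-1)) ≤ (∑ d(v)^(k/(k-1))) x_max^k`; a `k`-th root finishes.
-/

open Finset

theorem sum_prod_erase_le_card_mul_pow {V : Type*} [DecidableEq V] (E : Finset (Finset V))
    {k : ℕ} (hunif : ∀ e ∈ E, e.card = k) {x : V → ℝ} {M : ℝ} (hx : ∀ v, 0 ≤ x v)
    (hxM : ∀ v, x v ≤ M) (v : V) :
    ∑ e ∈ E.filter (fun e => v ∈ e), ∏ u ∈ e.erase v, x u
      ≤ (E.filter (fun e => v ∈ e)).card * M ^ (k - 1) := by
  rw [← nsmul_eq_mul, ← sum_const]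
  refine sum_le_sum fun e he => ?_
  rw [mem_filter] at he
  calc ∏ u ∈ e.erase v, x u ≤ ∏ _u ∈ e.erase v, M :=
        prod_le_prod (fun u _ => hx u) (fun u _ => hxM u)
    _ = M ^ (k - 1) := by rw [prod_const, card_erase_of_mem he.2, hunif e he.1]

theorem rpow_mul_pow_le_of_mul_pow_le {a b c M : ℝ} {m : ℕ} (n : ℕ) (hm : m ≠ 0)
    (ha : 0 ≤ a) (hb : 0 ≤ b) (hc : 0 ≤ c) (hM : 0 ≤ M) (h : c * a ^ m ≤ b * M ^ m) :
    c ^ ((n : ℝ) / m) * a ^ n ≤ b ^ ((n : ℝ) / m) * M ^ n := by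
  have root : ∀ y z : ℝ, 0 ≤ y → 0 ≤ z → (y * z ^ m) ^ ((n : ℝ) / m) = y ^ ((n : ℝ) / m) * z ^ n :=
    fun y z hy hz => by
      rw [Real.mul_rpow hy (by positivity), ← Real.rpow_natCast z m, ← Real.rpow_mul hz,
        mul_div_cancel₀ _ (by exact_mod_cast hm), Real.rpow_natCast]
  rw [← root c a hc ha, ← root b M hb hM]
  exact Real.rpow_le_rpow (by positivity) h (by positivity)

theorem rpow_one_div_sub_one_le_of_rpow_le {ρ S M : ℝ} {k : ℕ} (hk : 1 < k) (hρ : 0 ≤ ρ)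
    (hS : 0 ≤ S) (hM : 0 ≤ M) (h : ρ ^ ((k : ℝ) / ((k : ℝ) - 1)) ≤ S * M ^ k) :
    ρ ^ (1 / ((k : ℝ) - 1)) ≤ S ^ (1 / (k : ℝ)) * M := by
  have hk0 : (k : ℝ) ≠ 0 := by positivity
  have hk1 : (k : ℝ) - 1 ≠ 0 := by
    rw [sub_ne_zero]; exact_mod_cast hk.ne'
  calc ρ ^ (1 / ((k : ℝ) - 1)) = (ρ ^ ((k : ℝ) / ((k : ℝ) - 1))) ^ (1 / (k : ℝ)) := by
        rw [← Real.rpow_mul hρ]; field_simp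
    _ ≤ (S * M ^ k) ^ (1 / (k : ℝ)) := by gcongr
    _ = S ^ (1 / (k : ℝ)) * M := by
        rw [Real.mul_rpow hS (by positivity), ← Real.rpow_natCast, ← Real.rpow_mul hM,
          mul_one_div_cancel hk0, Real.rpow_one]

theorem stmt9 (V : Type*) [Fintype V] [DecidableEq V] [Nonempty V]
    (k : ℕ) (hk : 2 ≤ k)
    (E : Finset (Finset V))
    (hunif : ∀ e ∈ E, e.card = k)
    (x : V → ℝ) (hx : ∀ v, 0 < x v)
    (ρ : ℝ) (hρ : 0 < ρ)
    (heig : ∀ v : V, ∑ e ∈ E.filter (fun e => v ∈ e), ∏ u ∈ e.erase v, x u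
      = ρ * x v ^ (k - 1))
    (hnorm : ∑ v : V, x v ^ k = 1) :
    (Finset.univ.sup' Finset.univ_nonempty x) ≥ ρ ^ ((1:ℝ)/((k:ℝ) - 1))
      / (∑ v : V, ((E.filter (fun e => v ∈ e)).card : ℝ) ^ ((k:ℝ)/((k:ℝ) - 1))) ^ ((1:ℝ)/(k:ℝ)) := by
  set M := univ.sup' univ_nonempty x
  set d : V → ℝ := fun v => ((E.filter (fun e => v ∈ e)).card : ℝ)
  set p : ℝ := (k : ℝ) / ((k : ℝ) - 1)
  have hxM : ∀ v, x v ≤ M := fun v => le_sup' x (mem_univ v)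
  have hM : 0 ≤ M := (hx (Classical.arbitrary V)).le.trans (hxM _)
  have hp : p = (k : ℝ) / ((k - 1 : ℕ) : ℝ) := by rw [Nat.cast_sub (by omega), Nat.cast_one]
  have hvertex : ∀ v, ρ ^ p * x v ^ k ≤ d v ^ p * M ^ k := fun v => by
    rw [hp]
    refine rpow_mul_pow_le_of_mul_pow_le k (by omega) (hx v).le (by positivity) hρ.le hM ?_
    rw [← heig v]
    exact sum_prod_erase_le_card_mul_pow E hunif (fun u => (hx u).le) hxM v
  have hsum : ρ ^ p ≤ (∑ v, d v ^ p) * M ^ k :=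
    calc ρ ^ p = ∑ v, ρ ^ p * x v ^ k := by rw [← mul_sum, hnorm, mul_one]
      _ ≤ ∑ v, d v ^ p * M ^ k := sum_le_sum fun v _ => hvertex v
      _ = (∑ v, d v ^ p) * M ^ k := (sum_mul ..).symm
  have hS : 0 ≤ ∑ v, d v ^ p := sum_nonneg fun v _ => Real.rpow_nonneg (Nat.cast_nonneg _) p
  rw [ge_iff_le]
  refine div_le_of_le_mul₀ (Real.rpow_nonneg hS _) hM ?_
  rw [mul_comm]
  exact rpow_one_div_sub_one_le_of_rpow_le (by omega) hρ.le hS hM hsum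
end

section
/- Let H be a k-uniform hypergraph on n vertices with principal eigenpair (ρ, x) normalized by ∑_v x_v^k = 1, minimum degree δ > 0. Then x_min ≤ ( δ / (ρ + δ(n−1)) )^{1/k}. -/
/-!
Let `m = x_min` and `δ` the minimum degree. At a vertex where `x` attains `m`, each of its
`≥ δ` edges contributes at least `m^(k-1)` to the eigenequation, so `δ ≤ ρ`. At a vertex `w` of
degree `δ`, multiply the eigenequation by `x_w`: `ρ x_w^k` is a sum of `δ` edge products, and
AM-GM bounds each one by `(1/k) ∑_{u ∈ e} x_u^k ≤ (1/k) (1 - (n - k) m^k)`, since the `n - k`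
vertices outside `e` carry weight at least `m^k` each. Hence `m^k (kρ + (n - k)δ) ≤ δ`, and
`δ ≤ ρ` turns `kρ + (n - k)δ` into the smaller `ρ + (n - 1)δ`.
-/

open Finset

theorem Finset.prod_le_inv_card_mul_sum_pow_card {ι : Type*} {s : Finset ι} (hs : s.Nonempty)
    {x : ι → ℝ} (hx : ∀ i ∈ s, 0 ≤ x i) :
    ∏ i ∈ s, x i ≤ (#s : ℝ)⁻¹ * ∑ i ∈ s, x i ^ #s := by
  have hcard : (#s : ℝ) ≠ 0 := by positivity [hs.card_pos]
  have amgm := Real.geom_mean_le_arith_mean_weighted s (fun _ => (#s : ℝ)⁻¹)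
    (fun i => x i ^ #s) (fun _ _ => by positivity) (by simp [hcard])
    (fun i hi => pow_nonneg (hx i hi) _)
  rw [← Finset.mul_sum] at amgm
  calc ∏ i ∈ s, x i = ∏ i ∈ s, (x i ^ #s) ^ (#s : ℝ)⁻¹ :=
        Finset.prod_congr rfl fun i hi => (Real.pow_rpow_inv_natCast (hx i hi) hs.card_pos.ne').symm
    _ ≤ _ := amgm

theorem card_mul_pow_le_sum_sdiff_pow {ι : Type*} [Fintype ι] [DecidableEq ι] (s : Finset ι)
    {x : ι → ℝ} {m : ℝ} (hm : 0 ≤ m) (hmx : ∀ i, m ≤ x i) :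
    ((Fintype.card ι : ℝ) - #s) * m ^ #s ≤ ∑ i ∈ univ \ s, x i ^ #s := by
  have hcard : ((Fintype.card ι : ℝ) - #s) = #(univ \ s) := by
    rw [card_univ_sdiff, Nat.cast_sub (card_le_univ s)]
  calc ((Fintype.card ι : ℝ) - #s) * m ^ #s = ∑ _i ∈ univ \ s, m ^ #s := by
        rw [sum_const, nsmul_eq_mul, hcard]
    _ ≤ ∑ i ∈ univ \ s, x i ^ #s := sum_le_sum fun i _ => pow_le_pow_left₀ hm (hmx i) _

section Hypergraph

variable {V : Type*} [DecidableEq V] {k : ℕ} {E : Finset (Finset V)} {x : V → ℝ}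
  {ρ m : ℝ}

theorem card_mul_pow_le_sum_prod_erase (hunif : ∀ e ∈ E, #e = k) (hm : 0 ≤ m)
    (hmx : ∀ v, m ≤ x v) (v : V) :
    (#(E.filter (v ∈ ·)) : ℝ) * m ^ (k - 1) ≤ ∑ e ∈ E.filter (v ∈ ·), ∏ u ∈ e.erase v, x u := by
  rw [← nsmul_eq_mul, ← sum_const]
  refine sum_le_sum fun e he => ?_
  obtain ⟨heE, hve⟩ := mem_filter.mp he
  calc m ^ (k - 1) = ∏ _u ∈ e.erase v, m := by rw [prod_const, card_erase_of_mem hve, hunif e heE]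
    _ ≤ ∏ u ∈ e.erase v, x u := prod_le_prod (fun _ _ => hm) fun u _ => hmx u

theorem card_filter_mem_le_of_eigen (hunif : ∀ e ∈ E, #e = k)
    (heig : ∀ v, ∑ e ∈ E.filter (v ∈ ·), ∏ u ∈ e.erase v, x u = ρ * x v ^ (k - 1))
    {v : V} (hpos : 0 < x v) (hmin : ∀ u, x v ≤ x u) :
    (#(E.filter (v ∈ ·)) : ℝ) ≤ ρ := by
  have h := card_mul_pow_le_sum_prod_erase hunif hpos.le hmin v
  rw [heig v] at h
  exact le_of_mul_le_mul_right h (pow_pos hpos _)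

theorem mul_pow_eq_sum_prod_of_eigen (hk : 1 ≤ k)
    (heig : ∀ v, ∑ e ∈ E.filter (v ∈ ·), ∏ u ∈ e.erase v, x u = ρ * x v ^ (k - 1)) (v : V) :
    ρ * x v ^ k = ∑ e ∈ E.filter (v ∈ ·), ∏ u ∈ e, x u := by
  calc ρ * x v ^ k = (ρ * x v ^ (k - 1)) * x v := by
        rw [mul_assoc, ← pow_succ, Nat.sub_add_cancel hk]
    _ = ∑ e ∈ E.filter (v ∈ ·), ∏ u ∈ e, x u := by
      rw [← heig v, sum_mul]
      refine sum_congr rfl fun e he => ?_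
      rw [mul_comm, mul_prod_erase e x (mem_filter.mp he).2]

theorem prod_le_of_sum_pow_eq_one [Fintype V] (hk : 1 ≤ k) (hnorm : ∑ v, x v ^ k = 1)
    (hmx : ∀ v, m ≤ x v) (hm : 0 ≤ m) {e : Finset V} (he : #e = k) :
    ∏ u ∈ e, x u ≤ (k : ℝ)⁻¹ * (1 - ((Fintype.card V : ℝ) - k) * m ^ k) := by
  have hne : e.Nonempty := card_pos.mp (he ▸ hk)
  have hsplit := sum_sdiff (f := fun v => x v ^ k) (subset_univ e)
  have houtside := card_mul_pow_le_sum_sdiff_pow e hm hmx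
  rw [he] at houtside
  calc ∏ u ∈ e, x u ≤ (k : ℝ)⁻¹ * ∑ u ∈ e, x u ^ k := by
        simpa only [he] using prod_le_inv_card_mul_sum_pow_card hne fun u _ => hm.trans (hmx u)
    _ ≤ _ := by gcongr; linarith

end Hypergraph

theorem pow_le_div_of_mul_le {k n : ℕ} (hk : 1 ≤ k) {ρ δ t : ℝ} (hδ : 0 < δ) (hδρ : δ ≤ ρ)
    (hn : 1 ≤ n) (ht : 0 ≤ t)
    (h : ρ * t ≤ (δ / k) * (1 - ((n : ℝ) - k) * t)) :
    t ≤ δ / (ρ + δ * ((n : ℝ) - 1)) := by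
  have hk' : (1 : ℝ) ≤ k := by exact_mod_cast hk
  have hn' : (1 : ℝ) ≤ n := by exact_mod_cast hn
  rw [le_div_iff₀ (by nlinarith)]
  rw [div_mul_eq_mul_div, le_div_iff₀ (by linarith)] at h
  nlinarith [mul_nonneg (mul_nonneg ht (sub_nonneg.mpr hδρ)) (sub_nonneg.mpr hk')]

theorem stmt10_general (V : Type*) [Fintype V] [DecidableEq V] [Nonempty V]
    (k : ℕ) (hk : 2 ≤ k)
    (E : Finset (Finset V))
    (hunif : ∀ e ∈ E, e.card = k)
    (x : V → ℝ) (hx : ∀ v, 0 < x v)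
    (ρ : ℝ)
    (heig : ∀ v : V, ∑ e ∈ E.filter (fun e => v ∈ e), ∏ u ∈ e.erase v, x u
      = ρ * x v ^ (k - 1))
    (hnorm : ∑ v : V, x v ^ k = 1)
    (hδ : 0 < (Finset.univ.inf' Finset.univ_nonempty (fun v => ((E.filter (fun e => v ∈ e)).card : ℝ)))) :
    (Finset.univ.inf' Finset.univ_nonempty x) ≤ ((Finset.univ.inf' Finset.univ_nonempty (fun v => ((E.filter (fun e => v ∈ e)).card : ℝ))) / (ρ + (Finset.univ.inf' Finset.univ_nonempty (fun v => ((E.filter (fun e => v ∈ e)).card : ℝ))) * ((Fintype.card V : ℝ) - 1))) ^ ((1:ℝ)/(k:ℝ)) := by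
  obtain ⟨v₀, -, hv₀⟩ := exists_mem_eq_inf' univ_nonempty x
  obtain ⟨w, -, hw⟩ := exists_mem_eq_inf' univ_nonempty fun v => ((E.filter (fun e => v ∈ e)).card : ℝ)
  set δ := univ.inf' univ_nonempty fun v => ((E.filter (fun e => v ∈ e)).card : ℝ)
  set m := univ.inf' univ_nonempty x
  have hk1 : 1 ≤ k := by omega
  have hmx : ∀ v, m ≤ x v := fun v => inf'_le x (mem_univ v)
  have hm : 0 < m := hv₀ ▸ hx v₀
  have hδρ : δ ≤ ρ := (inf'_le _ (mem_univ v₀)).trans <|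
    card_filter_mem_le_of_eigen hunif heig (hx v₀) (hv₀ ▸ hmx)
  have hmk : ρ * m ^ k ≤ (δ / k) * (1 - ((Fintype.card V : ℝ) - k) * m ^ k) := by
    calc ρ * m ^ k ≤ ρ * x w ^ k :=
        mul_le_mul_of_nonneg_left (pow_le_pow_left₀ hm.le (hmx w) k) (hδ.le.trans hδρ)
      _ = ∑ e ∈ E.filter (w ∈ ·), ∏ u ∈ e, x u := mul_pow_eq_sum_prod_of_eigen hk1 heig w
      _ ≤ ∑ _e ∈ E.filter (w ∈ ·), (k : ℝ)⁻¹ * (1 - ((Fintype.card V : ℝ) - k) * m ^ k) :=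
        sum_le_sum fun e he => prod_le_of_sum_pow_eq_one hk1 hnorm hmx
          hm.le (hunif e (mem_filter.mp he).1)
      _ = (δ / k) * (1 - ((Fintype.card V : ℝ) - k) * m ^ k) := by
        rw [sum_const, nsmul_eq_mul, ← hw, div_eq_mul_inv, mul_assoc]
  have hbound := pow_le_div_of_mul_le hk1 hδ hδρ Fintype.card_pos (pow_nonneg hm.le k) hmk
  rw [one_div, Real.le_rpow_inv_iff_of_pos hm.le ((pow_nonneg hm.le k).trans hbound) (by positivity),
    Real.rpow_natCast]
  exact hbound

theorem stmt10 (V : Type*) [Fintype V] [DecidableEq V] [Nonempty V]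
    (k : ℕ) (hk : 2 ≤ k)
    (E : Finset (Finset V))
    (hunif : ∀ e ∈ E, e.card = k)
    (x : V → ℝ) (hx : ∀ v, 0 < x v)
    (ρ : ℝ) (hρ : 0 < ρ)
    (heig : ∀ v : V, ∑ e ∈ E.filter (fun e => v ∈ e), ∏ u ∈ e.erase v, x u
      = ρ * x v ^ (k - 1))
    (hnorm : ∑ v : V, x v ^ k = 1)
    (hδ : 0 < (Finset.univ.inf' Finset.univ_nonempty (fun v => ((E.filter (fun e => v ∈ e)).card : ℝ)))) :
    (Finset.univ.inf' Finset.univ_nonempty x) ≤ ((Finset.univ.inf' Finset.univ_nonempty (fun v => ((E.filter (fun e => v ∈ e)).card : ℝ))) / (ρ + (Finset.univ.inf' Finset.univ_nonempty (fun v => ((E.filter (fun e => v ∈ e)).card : ℝ))) * ((Fintype.card V : ℝ) - 1))) ^ ((1:ℝ)/(k:ℝ)) :=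
  stmt10_general V k hk E hunif x hx ρ heig hnorm hδ
end

section
/- Let H be a k-uniform hypergraph with principal eigenpair (ρ, x) and maximum degree Δ. Define x^e = ∏_{u∈e} x_u and x^max = max_{e∈E} x^e. Then x^max ≤ x_max^k ≤ (Δ/ρ)·x^max. -/
/-! Take a vertex `v` where `x` is maximal. Multiplying the eigenequation at `v` by `x_v` gives
`ρ x_max^k = ∑_{e ∋ v} x^e ≤ deg v · x^max ≤ Δ · x^max`; the other inequality holds edgewise,
since every factor of `x^e` is at most `x_max`. -/

open Finset

theorem prod_le_sup'_pow_card {V : Type*} [Fintype V] [Nonempty V] {x : V → ℝ}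
    (hx : ∀ v, 0 ≤ x v) (s : Finset V) :
    ∏ u ∈ s, x u ≤ (univ.sup' univ_nonempty x) ^ s.card := by
  calc ∏ u ∈ s, x u ≤ ∏ _u ∈ s, univ.sup' univ_nonempty x :=
        prod_le_prod (fun u _ => hx u) (fun u _ => le_sup' x (mem_univ u))
    _ = _ := prod_const _

theorem sum_filter_le_card_filter_mul_sup' {ι : Type*} (s : Finset ι) (hs : s.Nonempty)
    (p : ι → Prop) [DecidablePred p] (f : ι → ℝ) :
    ∑ i ∈ s.filter p, f i ≤ #(s.filter p) * s.sup' hs f := by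
  simpa only [nsmul_eq_mul] using
    sum_le_card_nsmul _ f _ fun i hi => le_sup' f (mem_filter.mp hi).1

theorem mul_pow_eq_sum_prod_of_eigenequation {V : Type*} [DecidableEq V] {k : ℕ} (hk : 1 ≤ k)
    (E : Finset (Finset V)) (x : V → ℝ) (ρ : ℝ) (v : V)
    (heig : ∑ e ∈ E.filter (fun e => v ∈ e), ∏ u ∈ e.erase v, x u = ρ * x v ^ (k - 1)) :
    ρ * x v ^ k = ∑ e ∈ E.filter (fun e => v ∈ e), ∏ u ∈ e, x u := by
  calc ρ * x v ^ k = ρ * x v ^ (k - 1) * x v := by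
        rw [mul_assoc, ← pow_succ, Nat.sub_add_cancel hk]
    _ = ∑ e ∈ E.filter (fun e => v ∈ e), (∏ u ∈ e.erase v, x u) * x v := by
        rw [← heig, sum_mul]
    _ = _ := sum_congr rfl fun e he => prod_erase_mul e x (mem_filter.mp he).2

theorem stmt14 (V : Type*) [Fintype V] [DecidableEq V] [Nonempty V]
    (k : ℕ) (hk : 2 ≤ k)
    (E : Finset (Finset V))
    (hunif : ∀ e ∈ E, e.card = k)
    (x : V → ℝ) (hx : ∀ v, 0 < x v)
    (ρ : ℝ) (hρ : 0 < ρ)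
    (heig : ∀ v : V, ∑ e ∈ E.filter (fun e => v ∈ e), ∏ u ∈ e.erase v, x u
      = ρ * x v ^ (k - 1))
    (hE : E.Nonempty) :
    E.sup' hE (fun e => ∏ u ∈ e, x u) ≤ (Finset.univ.sup' Finset.univ_nonempty x) ^ k ∧
      (Finset.univ.sup' Finset.univ_nonempty x) ^ k ≤ ((Finset.univ.sup' Finset.univ_nonempty (fun v => ((E.filter (fun e => v ∈ e)).card : ℝ))) / ρ) * E.sup' hE (fun e => ∏ u ∈ e, x u) := by
  set P := E.sup' hE (fun e => ∏ u ∈ e, x u)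
  refine ⟨sup'_le _ _ fun e he => hunif e he ▸ prod_le_sup'_pow_card (fun v => (hx v).le) e, ?_⟩
  obtain ⟨v, -, hv⟩ := exists_mem_eq_sup' univ_nonempty x
  have hP : 0 < P := by
    obtain ⟨e, he⟩ := hE
    exact (prod_pos fun u _ => hx u).trans_le (le_sup' (fun e => ∏ u ∈ e, x u) he)
  rw [div_mul_eq_mul_div, le_div_iff₀ hρ, hv, mul_comm,
    mul_pow_eq_sum_prod_of_eigenequation (by omega) E x ρ v (heig v)]
  calc ∑ e ∈ E.filter (fun e => v ∈ e), ∏ u ∈ e, x u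
      ≤ #(E.filter (fun e => v ∈ e)) * P := sum_filter_le_card_filter_mul_sup' E hE _ _
    _ ≤ _ := mul_le_mul_of_nonneg_right
        (le_sup' (fun v => (#(E.filter (fun e => v ∈ e)) : ℝ)) (mem_univ v)) hP.le
end

section
/- Let H be a k-uniform hypergraph with m edges, every vertex having positive degree, and principal eigenpair (ρ, x) normalized by ∑_v x_v^k = 1. If ∏_{u∈e} x_u is the same for all edges e (i.e., Γ(H) = 1), then the product ∏_{u∈e} d(u) of vertex degrees over any edge e equals ρ^k; in particular it is the same for every edge. -/
open Finset

/-!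
Multiplying the eigenvalue equation at `v` by `x v` turns each summand into the full edge product
`∏_{u ∈ e} x u`. When all edge products equal a common `c`, this reads `d(v) * c = ρ * x v ^ k`.
Taking the product over the `k` vertices of an edge gives `(∏_{u ∈ e} d(u)) * c ^ k = ρ ^ k * c ^ k`,
and `c > 0` cancels.
-/

section

variable {V R : Type*} [DecidableEq V] [CommSemiring R] (E : Finset (Finset V)) (x : V → R)

theorem sum_prod_erase_mul_self (v : V) :
    (∑ e ∈ E.filter (v ∈ ·), ∏ u ∈ e.erase v, x u) * x v
      = ∑ e ∈ E.filter (v ∈ ·), ∏ u ∈ e, x u := by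
  rw [sum_mul]
  refine sum_congr rfl fun e he => ?_
  rw [mul_comm, mul_prod_erase _ _ (mem_filter.1 he).2]

theorem card_filter_mem_mul_eq_of_prod_eq {k : ℕ} (hk : k ≠ 0) {ρ c : R}
    (hc : ∀ e ∈ E, ∏ u ∈ e, x u = c) (v : V)
    (heig : ∑ e ∈ E.filter (v ∈ ·), ∏ u ∈ e.erase v, x u = ρ * x v ^ (k - 1)) :
    ((E.filter (v ∈ ·)).card : R) * c = ρ * x v ^ k := by
  calc ((E.filter (v ∈ ·)).card : R) * c = ∑ e ∈ E.filter (v ∈ ·), ∏ u ∈ e, x u := by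
        rw [sum_congr rfl fun e he => hc e (mem_filter.1 he).1, sum_const, nsmul_eq_mul]
    _ = ρ * x v ^ k := by
        rw [← sum_prod_erase_mul_self, heig, mul_assoc, pow_sub_one_mul hk]

end

theorem stmt18_general (V : Type*) [DecidableEq V]
    (k : ℕ)
    (E : Finset (Finset V))
    (hunif : ∀ e ∈ E, e.card = k)
    (x : V → ℝ) (hx : ∀ v, 0 < x v)
    (ρ : ℝ)
    (heig : ∀ v : V, ∑ e ∈ E.filter (fun e => v ∈ e), ∏ u ∈ e.erase v, x u
      = ρ * x v ^ (k - 1))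
    (hconst : ∀ e ∈ E, ∀ e' ∈ E, (∏ u ∈ e, x u) = ∏ u ∈ e', x u) :
    ∀ e ∈ E, (∏ u ∈ e, ((E.filter (fun e' => u ∈ e')).card : ℝ)) = ρ ^ k := by
  intro e he
  set c := ∏ u ∈ e, x u
  have hc : ∀ e' ∈ E, ∏ u ∈ e', x u = c := fun e' he' => hconst e' he' e he
  have hc_pos : 0 < c := prod_pos fun u _ => hx u
  have hdeg_mul : ∀ u ∈ e, ((E.filter (u ∈ ·)).card : ℝ) * c = ρ * x u ^ k := fun u hu =>
    card_filter_mem_mul_eq_of_prod_eq E x (hunif e he ▸ (card_pos.2 ⟨u, hu⟩).ne') hc u (heig u)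
  apply mul_right_cancel₀ (pow_ne_zero k hc_pos.ne')
  calc (∏ u ∈ e, ((E.filter (u ∈ ·)).card : ℝ)) * c ^ k
      = ∏ u ∈ e, ((E.filter (u ∈ ·)).card : ℝ) * c := by
        rw [prod_mul_distrib, prod_const, hunif e he]
    _ = ∏ u ∈ e, ρ * x u ^ k := prod_congr rfl hdeg_mul
    _ = ρ ^ k * c ^ k := by
        rw [prod_mul_distrib, prod_const, hunif e he, prod_pow]

theorem stmt18 (V : Type*) [Fintype V] [DecidableEq V] [Nonempty V]
    (k : ℕ) (hk : 2 ≤ k)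
    (E : Finset (Finset V))
    (hunif : ∀ e ∈ E, e.card = k)
    (x : V → ℝ) (hx : ∀ v, 0 < x v)
    (ρ : ℝ) (hρ : 0 < ρ)
    (heig : ∀ v : V, ∑ e ∈ E.filter (fun e => v ∈ e), ∏ u ∈ e.erase v, x u
      = ρ * x v ^ (k - 1))
    (hnorm : ∑ v : V, x v ^ k = 1)
    (hE : E.Nonempty)
    (hdeg : ∀ v : V, 0 < (E.filter (fun e => v ∈ e)).card)
    (hconst : ∀ e ∈ E, ∀ e' ∈ E, (∏ u ∈ e, x u) = ∏ u ∈ e', x u) :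
    ∀ e ∈ E, (∏ u ∈ e, ((E.filter (fun e' => u ∈ e')).card : ℝ)) = ρ ^ k :=
  stmt18_general V k E hunif x hx ρ heig hconst
end

section
/- Let H be a k-uniform hypergraph with m ≥ 1 edges in which every vertex has positive degree, and suppose there is a constant D > 0 such that ∏_{u∈e} d(u) = D for every edge e. Then the vector x defined by x_u = (d(u)/(km))^{1/k} satisfies ∑_v x_v^k = 1 and ∑_{e ∋ v} ∏_{u∈e,u≠v} x_u = D^{1/k} · x_v^{k-1} for every vertex v; i.e., (D^{1/k}, x) is a positive ℓ^k-normalized eigenpair, and ∏_{u∈e} x_u = D^{1/k}/(km) is the same for every edge e. -/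
/-! With `d` the degree and `m = |E|`, the vector `x_u = (d(u)/(km))^{1/k}` satisfies
`x_u^k = d(u)/(km)`, so `∑ x_v^k = 1` by the handshake identity `∑ d(v) = km`. On an edge `e`,
`∏_{u∈e} x_u = (∏_{u∈e} d(u) / (km)^k)^{1/k} = D^{1/k}/(km) =: c` is independent of `e`; hence
each of the `d(v)` terms of the eigen-equation at `v` equals `c / x_v`, and
`d(v) · c / x_v = km · c · x_v^{k-1} = D^{1/k} x_v^{k-1}`. -/

open Finset

section Hypergraph

variable {V : Type*} [DecidableEq V]

theorem sum_card_filter_mem_of_uniform [Fintype V] {E : Finset (Finset V)} {k : ℕ}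
    (hunif : ∀ e ∈ E, e.card = k) :
    ∑ v, (E.filter (fun e => v ∈ e)).card = k * E.card := by
  have := sum_card_bipartiteAbove_eq_sum_card_bipartiteBelow (s := univ) (t := E)
    (r := fun v e => v ∈ e)
  simp only [bipartiteAbove, bipartiteBelow, filter_mem_eq_inter, univ_inter] at this
  rw [this, sum_congr rfl hunif, sum_const, smul_eq_mul, mul_comm]

theorem sum_prod_erase_of_prod_eq {E : Finset (Finset V)} {x : V → ℝ} {c : ℝ}
    (hprod : ∀ e ∈ E, ∏ u ∈ e, x u = c) {v : V} (hv : x v ≠ 0) :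
    ∑ e ∈ E.filter (fun e => v ∈ e), ∏ u ∈ e.erase v, x u
      = (E.filter (fun e => v ∈ e)).card * c / x v := by
  have hterm : ∀ e ∈ E.filter (fun e => v ∈ e), ∏ u ∈ e.erase v, x u = c / x v := by
    intro e he
    rw [mem_filter] at he
    rw [← hprod e he.1, ← mul_prod_erase e x he.2, mul_div_cancel_left₀ _ hv]
  rw [sum_congr rfl hterm, sum_const, nsmul_eq_mul, mul_div_assoc]

end Hypergraph

theorem prod_div_rpow_one_div_card {V : Type*} {e : Finset V} {d : V → ℝ}
    (hd : ∀ u ∈ e, 0 ≤ d u) {s : ℝ} (hs : 0 < s) {k : ℕ} (hk : k ≠ 0) (he : e.card = k) :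
    ∏ u ∈ e, (d u / s) ^ ((1:ℝ)/(k:ℝ)) = (∏ u ∈ e, d u) ^ ((1:ℝ)/(k:ℝ)) / s := by
  rw [Real.finsetProd_rpow _ _ fun u hu => div_nonneg (hd u hu) hs.le, prod_div_distrib,
    prod_const, he, Real.div_rpow (prod_nonneg hd) (by positivity), one_div,
    Real.pow_rpow_inv_natCast hs.le hk]

theorem stmt19_general (V : Type*) [Fintype V] [DecidableEq V]
    (k : ℕ) (hk : 2 ≤ k)
    (E : Finset (Finset V))
    (hunif : ∀ e ∈ E, e.card = k)
    (hE : E.Nonempty)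
    (hdeg : ∀ v : V, 0 < (E.filter (fun e => v ∈ e)).card)
    (D : ℝ)
    (hconst : ∀ e ∈ E, (∏ u ∈ e, ((E.filter (fun e' => u ∈ e')).card : ℝ)) = D)
    (x : V → ℝ)
    (hxdef : ∀ u : V, x u = (((E.filter (fun e => u ∈ e)).card : ℝ) / (k * E.card)) ^ ((1:ℝ)/(k:ℝ))) :
    (∑ v : V, x v ^ k = 1) ∧
    (∀ v : V, ∑ e ∈ E.filter (fun e => v ∈ e), ∏ u ∈ e.erase v, x u
      = D ^ ((1:ℝ)/(k:ℝ)) * x v ^ (k - 1)) ∧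
    (∀ e ∈ E, (∏ u ∈ e, x u) = D ^ ((1:ℝ)/(k:ℝ)) / (k * E.card)) := by
  have hk0 : k ≠ 0 := by omega
  have hs : (0:ℝ) < k * E.card := by have := hE.card_pos; positivity
  have hxpos (u : V) : 0 < x u := by
    rw [hxdef u]; have := hdeg u; positivity
  have hxk (u : V) : x u ^ k = (E.filter (fun e => u ∈ e)).card / (k * E.card) := by
    rw [hxdef u, one_div, Real.rpow_inv_natCast_pow (by positivity) hk0]
  have hprod (e : Finset V) (he : e ∈ E) :
      ∏ u ∈ e, x u = D ^ ((1:ℝ)/(k:ℝ)) / (k * E.card) := by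
    rw [prod_congr rfl fun u _ => hxdef u,
      prod_div_rpow_one_div_card (fun _ _ => Nat.cast_nonneg _) hs hk0 (hunif e he), hconst e he]
  refine ⟨?_, fun v => ?_, hprod⟩
  · have hsum := sum_card_filter_mem_of_uniform hunif
    rw [sum_congr rfl fun u _ => hxk u, ← sum_div, ← Nat.cast_sum, hsum]
    push_cast
    exact div_self hs.ne'
  · have hxv := (hxpos v).ne'
    rw [sum_prod_erase_of_prod_eq hprod hxv, ← mul_div_cancel_right₀ (x v ^ (k - 1)) hxv,
      pow_sub_one_mul hk0, hxk v]
    field_simp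

theorem stmt19 (V : Type*) [Fintype V] [DecidableEq V] [Nonempty V]
    (k : ℕ) (hk : 2 ≤ k)
    (E : Finset (Finset V))
    (hunif : ∀ e ∈ E, e.card = k)
    (hE : E.Nonempty)
    (hdeg : ∀ v : V, 0 < (E.filter (fun e => v ∈ e)).card)
    (D : ℝ) (hD : 0 < D)
    (hconst : ∀ e ∈ E, (∏ u ∈ e, ((E.filter (fun e' => u ∈ e')).card : ℝ)) = D)
    (x : V → ℝ)
    (hxdef : ∀ u : V, x u = (((E.filter (fun e => u ∈ e)).card : ℝ) / (k * E.card)) ^ ((1:ℝ)/(k:ℝ))) :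
    (∑ v : V, x v ^ k = 1) ∧
    (∀ v : V, ∑ e ∈ E.filter (fun e => v ∈ e), ∏ u ∈ e.erase v, x u
      = D ^ ((1:ℝ)/(k:ℝ)) * x v ^ (k - 1)) ∧
    (∀ e ∈ E, (∏ u ∈ e, x u) = D ^ ((1:ℝ)/(k:ℝ)) / (k * E.card)) :=
  stmt19_general V k hk E hunif hE hdeg D hconst x hxdef
end
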